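/- An oriented matroid G is a uniform oriented matroid if and only if every proper face of G (proper antipodal subgraph of its tope graph) is a hypercube, and this holds if and only if every halfspace of its tope graph is an ample partial cube. -/

import Mathlib

open Finset
open scoped Classical

variable {U : Type*}

/-- Hamming distance between two vertices of the hypercube `U → Bool`. -/
def hDist [Fintype U] [DecidableEq U] (x y : U → Bool) : ℕ :=
  (Finset.univ.filter fun i => x i ≠ y i).card

/-- The hypercube graph on `U → Bool`: two vertices are adjacent iff they differ
in exactly one coordinate. -/
def cubeGraph (U : Type*) [Fintype U] [DecidableEq U] : SimpleGraph (U → Bool) where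
  Adj x y := hDist x y = 1
  symm := by
    constructor
    intro x y h
    have hs : (Finset.univ.filter fun i => y i ≠ x i) =
        (Finset.univ.filter fun i => x i ≠ y i) := by
      apply Finset.filter_congr
      intro i _
      exact ne_comm
    simpa [hDist, hs] using h
  loopless := by
    constructor
    intro x h
    simp [hDist] at h

/-- Distance between `x` and `y` inside the subgraph of the hypercube induced by `A`
(`0` if one of them is not in `A`). -/
noncomputable def dIn [Fintype U] [DecidableEq U] (A : Set (U → Bool)) (x y : U → Bool) : ℕ :=
  if h : x ∈ A ∧ y ∈ A then ((cubeGraph U).induce A).dist ⟨x, h.1⟩ ⟨y, h.2⟩ else 0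

/-- A set of vertices of the hypercube is a partial cube if its induced graph is connected
and the induced graph distance coincides with the Hamming distance
(i.e. it is an isometric subgraph of the hypercube). -/
def IsPartialCube [Fintype U] [DecidableEq U] (A : Set (U → Bool)) : Prop :=
  ((cubeGraph U).induce A).Connected ∧ ∀ x ∈ A, ∀ y ∈ A, dIn A x y = hDist x y

/-- `A` shatters the coordinate set `X`. -/
def Shatters [Fintype U] [DecidableEq U] (A : Set (U → Bool)) (X : Finset U) : Prop :=
  ∀ g : U → Bool, ∃ a ∈ A, ∀ i ∈ X, a i = g i

/-- `A` strongly shatters `X`: it contains a full subcube over the coordinates `X`. -/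
def StronglyShatters [Fintype U] [DecidableEq U] (A : Set (U → Bool)) (X : Finset U) : Prop :=
  ∃ a : U → Bool, ∀ g : U → Bool, (fun i => if i ∈ X then g i else a i) ∈ A

/-- An ample set family: every shattered set is strongly shattered. -/
def IsAmple [Fintype U] [DecidableEq U] (A : Set (U → Bool)) : Prop :=
  ∀ X : Finset U, Shatters A X → StronglyShatters A X

/-- Composition of sign vectors: `(X ∘ Y) e = X e` if `X e ≠ 0`, else `Y e`. -/
def comp (X Y : U → SignType) : U → SignType := fun e => if X e = 0 then Y e else X e

/-- The support of a sign vector. -/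
def supp (X : U → SignType) : Set U := {e | X e ≠ 0}

/-- The separator of two sign vectors. -/
def sep [Fintype U] [DecidableEq U] (X Y : U → SignType) : Finset U :=
  Finset.univ.filter fun e => X e * Y e = -1

/-- A complex of oriented matroids: face symmetry and strong elimination. -/
structure IsCOM (L : Set (U → SignType)) : Prop where
  fs : ∀ X ∈ L, ∀ Y ∈ L, comp X (-Y) ∈ L
  se : ∀ X ∈ L, ∀ Y ∈ L, ∀ e : U, X e * Y e = -1 →
      ∃ Z ∈ L, Z e = 0 ∧ ∀ f : U, X f * Y f ≠ -1 → Z f = comp X Y f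

/-- An oriented matroid: composition, strong elimination and symmetry. -/
structure IsOM (L : Set (U → SignType)) : Prop where
  c : ∀ X ∈ L, ∀ Y ∈ L, comp X Y ∈ L
  se : ∀ X ∈ L, ∀ Y ∈ L, ∀ e : U, X e * Y e = -1 →
      ∃ Z ∈ L, Z e = 0 ∧ ∀ f : U, X f * Y f ≠ -1 → Z f = comp X Y f
  sym : ∀ X ∈ L, -X ∈ L

/-- A simple system of sign vectors. -/
def SimpleSV (L : Set (U → SignType)) : Prop :=
  (∀ e : U, ∀ s : SignType, ∃ X ∈ L, X e = s) ∧
  ∀ e f : U, e ≠ f → (∃ X ∈ L, X e * X f = 1) ∧ (∃ Y ∈ L, Y e * Y f = -1)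

/-- The topes of a system of sign vectors: the covectors with full support. -/
def Topes (L : Set (U → SignType)) : Set (U → SignType) := {X ∈ L | ∀ e, X e ≠ 0}

/-- Conversion of a (full support) sign vector to a vertex of the hypercube. -/
def tb (X : U → SignType) : U → Bool := fun e => decide (X e = 1)

/-- The vertex set of the tope graph inside the hypercube. -/
def TopeSet (L : Set (U → SignType)) : Set (U → Bool) := tb '' Topes L

/-- The face of a covector `X`. -/
def face (L : Set (U → SignType)) (X : U → SignType) : Set (U → SignType) :=
  {Z | ∃ Y ∈ L, Z = comp X Y}

/-- `X` is a cocircuit of `L`: a minimal nonzero covector with respect to the conformal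
order. -/
def Cocircuit (L : Set (U → SignType)) (X : U → SignType) : Prop :=
  X ∈ L ∧ X ≠ 0 ∧ ∀ Y ∈ L, Y ≠ 0 → (∀ e, Y e = 0 ∨ Y e = X e) → Y = X

/-- `L` is a uniform oriented matroid of rank `r` on the `m`-element set `U`: the cocircuits
are exactly the (pairs of opposite) signings of the subsets of `U` of size `m - r + 1`. -/
def IsUOMofRank [Fintype U] [DecidableEq U] (L : Set (U → SignType)) (r : ℕ) : Prop :=
  (∀ X : U → SignType, Cocircuit L X →
      (Finset.univ.filter fun e => X e ≠ 0).card = Fintype.card U - r + 1) ∧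
  (∀ A : Finset U, A.card = Fintype.card U - r + 1 →
      ∃ X : U → SignType, Cocircuit L X ∧ (Finset.univ.filter fun e => X e ≠ 0) = A) ∧
  (∀ X Y : U → SignType, Cocircuit L X → Cocircuit L Y →
      (∀ e, X e ≠ 0 ↔ Y e ≠ 0) → Y = X ∨ Y = -X)

/-!
If `L` is uniform of rank `r`, every `(m - r + 1)`-set supports a cocircuit of either sign, and
every nonzero covector has at least `m - r + 1` nonzero entries. Composing a nonzero covector `X`
with a cocircuit supported on a zero `e` of `X` and `m - r` elements of the support of `X` changes
`X` only at `e`, with either sign, so every sign vector above `X` is a covector. Conversely, if all proper faces are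
cubes, let `k` be the least size of a nonzero support. Changing a minimal covector `Y` and `-Y`
to `+` at `f ∉ supp Y` and eliminating at `e ∈ supp Y` exchanges `e` for `f`, so every `k`-set is a
support. Strong elimination shows that cocircuit supports are inclusion-minimal and determine the
cocircuit up to sign, hence every cocircuit has support size `k` and `L` is uniform of rank
`m - k + 1`.

If faces are cubes and the halfspace `{e = b}` shatters `S`, eliminating the coordinates of `S` one
at a time gives a covector vanishing on `S` with sign `b` at `e`; its face contains a full subcube
over `S`. Conversely, assume the halfspaces are ample and induct downward on the support of `X`.
Let `W₁` be a covector strictly above `X` of least support and `z` a zero of `X` with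
`W₁ z ≠ 0`. By induction the faces of `W₁` and of its reorientation `X ∘ -W₁` are cubes, so the
halfspace containing the topes above `X` shatters `z` together with the common zeros of `X` and
`W₁`. A full subcube over this set eliminates to a covector `V`, and `X ∘ V` would lie strictly
between `X` and `W₁` unless `W₁` is nonzero only at `z` among the zeros of `X`. Then every sign
pattern on the zeros of `X` occurs on a covector above `X`, and elimination yields every sign
vector above `X`.
-/

namespace SignType

theorem mul_self_ne_neg_one (s : SignType) : s * s ≠ -1 := by decide +revert

theorem eq_of_mul_ne_neg_one {s t : SignType} (hs : s ≠ 0) (ht : t ≠ 0) (h : s * t ≠ -1) :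
    s = t := by
  decide +revert

theorem eq_neg_of_mul_eq_neg_one {s t : SignType} (h : s * t = -1) : t = -s := by decide +revert

theorem ne_zero_of_mul_eq_neg_one {s t : SignType} (h : s * t = -1) : s ≠ 0 := by decide +revert

theorem eq_or_eq_neg_of_ne_zero {s t : SignType} (hs : s ≠ 0) (ht : t ≠ 0) :
    t = s ∨ t = -s := by
  decide +revert

theorem mul_neg_self_of_ne_zero {s : SignType} (hs : s ≠ 0) : s * -s = -1 := by decide +revert

def ofBool (b : Bool) : SignType := if b then 1 else -1

theorem ofBool_ne_zero (b : Bool) : ofBool b ≠ 0 := by cases b <;> decide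

theorem decide_ofBool_eq_one (b : Bool) : decide (ofBool b = 1) = b := by cases b <;> rfl

theorem ofBool_decide_eq_one {s : SignType} (hs : s ≠ 0) : ofBool (decide (s = 1)) = s := by
  decide +revert

end SignType

open SignType

def ConformalLE (X Y : U → SignType) : Prop := ∀ e, X e = 0 ∨ X e = Y e

infix:50 " ≼ " => ConformalLE

namespace ConformalLE

variable {X Y Z : U → SignType}

theorem refl (X : U → SignType) : X ≼ X := fun _ => Or.inr rfl

theorem apply_eq (h : X ≼ Y) {e : U} (he : X e ≠ 0) : Y e = X e := ((h e).resolve_left he).symm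

theorem trans (h₁ : X ≼ Y) (h₂ : Y ≼ Z) : X ≼ Z := by
  intro e
  by_cases he : X e = 0
  · exact Or.inl he
  · exact Or.inr (by rw [h₂.apply_eq (by rwa [h₁.apply_eq he]), h₁.apply_eq he])

theorem ne_zero (h : X ≼ Y) (hX : X ≠ 0) : Y ≠ 0 := fun hY =>
  hX (funext fun e => (h e).elim id (·.trans (congrFun hY e)))

end ConformalLE

section Composition

variable {X Y : U → SignType} {e : U}

theorem comp_apply_of_ne_zero (h : X e ≠ 0) : comp X Y e = X e := if_neg h

theorem comp_apply_of_eq_zero (h : X e = 0) : comp X Y e = Y e := if_pos h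

theorem comp_apply_of_eq (h : X e = Y e) : comp X Y e = X e := by
  by_cases h0 : X e = 0
  · rw [comp_apply_of_eq_zero h0, ← h, h0]
  · exact comp_apply_of_ne_zero h0

theorem conformalLE_comp (X Y : U → SignType) : X ≼ comp X Y := fun e => by
  by_cases h : X e = 0
  · exact Or.inl h
  · exact Or.inr (comp_apply_of_ne_zero h).symm

theorem comp_ne_zero_apply (hY : Y e ≠ 0) : comp X Y e ≠ 0 := by
  by_cases h : X e = 0
  · rwa [comp_apply_of_eq_zero h]
  · rwa [comp_apply_of_ne_zero h]

end Composition

section Support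

variable [Fintype U] {X Y : U → SignType}

def suppFinset (X : U → SignType) : Finset U := univ.filter fun e => X e ≠ 0

@[simp]
theorem mem_suppFinset {e : U} : e ∈ suppFinset X ↔ X e ≠ 0 := by simp [suppFinset]

theorem suppFinset_neg (X : U → SignType) : suppFinset (-X) = suppFinset X := by
  ext e; simp

theorem ConformalLE.suppFinset_subset (h : X ≼ Y) : suppFinset X ⊆ suppFinset Y :=
  fun e he => by
  rw [mem_suppFinset] at he ⊢
  rwa [h.apply_eq he]

theorem ConformalLE.eq_of_suppFinset_subset (h : X ≼ Y) (hs : suppFinset Y ⊆ suppFinset X) :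
    X = Y := by
  funext e
  rcases h e with h0 | he
  · by_contra hne
    exact (mem_suppFinset.1 (hs (mem_suppFinset.2 fun hY => hne (h0.trans hY.symm)))) h0
  · exact he

theorem ConformalLE.suppFinset_ssubset (h : X ≼ Y) (hne : X ≠ Y) :
    suppFinset X ⊂ suppFinset Y :=
  Finset.ssubset_iff_subset_ne.2
    ⟨h.suppFinset_subset, fun hs => hne (h.eq_of_suppFinset_subset hs.ge)⟩

theorem ne_zero_of_suppFinset_nonempty (h : (suppFinset X).Nonempty) : X ≠ 0 :=
  Function.ne_iff.2 (h.imp fun _ he => mem_suppFinset.1 he)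

end Support

def StrongElim (L : Set (U → SignType)) : Prop :=
  ∀ X ∈ L, ∀ Y ∈ L, ∀ e : U, X e * Y e = -1 →
    ∃ Z ∈ L, Z e = 0 ∧ ∀ f : U, X f * Y f ≠ -1 → Z f = comp X Y f

theorem IsOM.strongElim {L : Set (U → SignType)} (hom : IsOM L) : StrongElim L := hom.se

namespace StrongElim

variable {L : Set (U → SignType)} {X Y : U → SignType} {e : U}

theorem exists_eq_of_eq (hse : StrongElim L) (hX : X ∈ L) (hY : Y ∈ L) (he : X e * Y e = -1) :
    ∃ Z ∈ L, Z e = 0 ∧ ∀ f, X f = Y f → Z f = X f := by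
  obtain ⟨Z, hZ, hZe, hZf⟩ := hse X hX Y hY e he
  refine ⟨Z, hZ, hZe, fun f hf => ?_⟩
  rw [hZf f (hf ▸ mul_self_ne_neg_one _), comp_apply_of_eq hf]

theorem exists_zero_on (hse : StrongElim L) {S K : Finset U} (hSK : Disjoint S K)
    {c : U → SignType}
    (h : ∀ g : U → Bool, ∃ Z ∈ L, (∀ x ∈ S, Z x = ofBool (g x)) ∧ ∀ y ∈ K, Z y = c y) :
    ∃ V ∈ L, (∀ x ∈ S, V x = 0) ∧ ∀ y ∈ K, V y = c y := by
  classical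
  induction S using Finset.induction_on generalizing K c with
  | empty =>
    obtain ⟨Z, hZ, -, hZK⟩ := h fun _ => true
    exact ⟨Z, hZ, by simp, hZK⟩
  | @insert x S hx ih =>
    rw [Finset.disjoint_insert_left] at hSK
    have hK : Disjoint S (insert x K) := Finset.disjoint_insert_right.2 ⟨hx, hSK.2⟩
    obtain ⟨V, hV, hVS, hVK⟩ := ih hK (c := Function.update c x 0) fun g => by
      obtain ⟨Zp, hZp, hZpS, hZpK⟩ := h (Function.update g x true)
      obtain ⟨Zm, hZm, hZmS, hZmK⟩ := h (Function.update g x false)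
      have hZpx : Zp x = 1 := by simpa [ofBool] using hZpS x (mem_insert_self x S)
      have hZmx : Zm x = -1 := by simpa [ofBool] using hZmS x (mem_insert_self x S)
      obtain ⟨W, hW, hWx, hWf⟩ := hse.exists_eq_of_eq hZp hZm (by rw [hZpx, hZmx]; decide)
      refine ⟨W, hW, fun f hf => ?_, fun y hy => ?_⟩
      · have hfx : f ≠ x := ne_of_mem_of_not_mem hf hx
        have hp := hZpS f (mem_insert_of_mem hf)
        have hm := hZmS f (mem_insert_of_mem hf)
        rw [Function.update_of_ne hfx] at hp hm
        rw [hWf f (hp.trans hm.symm), hp]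
      · rcases mem_insert.1 hy with rfl | hy
        · simpa using hWx
        · have hyx : y ≠ x := ne_of_mem_of_not_mem hy hSK.1
          rw [Function.update_of_ne hyx, hWf y ((hZpK y hy).trans (hZmK y hy).symm), hZpK y hy]
    refine ⟨V, hV, fun y hy => ?_, fun y hy => ?_⟩
    · rcases mem_insert.1 hy with rfl | hy
      · simpa using hVK y (mem_insert_self y K)
      · exact hVS y hy
    · simpa [Function.update_of_ne (ne_of_mem_of_not_mem hy hSK.1)] using
        hVK y (mem_insert_of_mem hy)

variable [Fintype U]

theorem exists_of_suppFinset_subset (hse : StrongElim L) (hX : X ∈ L) (hY : Y ∈ L)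
    (hsub : suppFinset Y ⊆ suppFinset X) (he : X e * Y e = -1) :
    ∃ V ∈ L, V e = 0 ∧ suppFinset V ⊆ suppFinset X ∧
      ∀ u, X u ≠ 0 → X u * Y u ≠ -1 → V u = X u := by
  obtain ⟨V, hV, hVe, hVf⟩ := hse X hX Y hY e he
  refine ⟨V, hV, hVe, fun u hu => ?_, fun u hXu hu => ?_⟩
  swap
  · rw [hVf u hu, comp_apply_of_ne_zero hXu]
  rw [mem_suppFinset] at hu ⊢
  intro hXu
  have hYu : Y u = 0 := by
    by_contra hYu
    exact mem_suppFinset.1 (hsub (mem_suppFinset.2 hYu)) hXu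
  rw [hVf u (by simp [hXu]), comp_apply_of_eq_zero hXu, hYu] at hu
  exact hu rfl

end StrongElim

section Cocircuits

variable [Fintype U] {L : Set (U → SignType)} {X Y : U → SignType}

theorem exists_cocircuit_conformalLE (hX : X ∈ L) (hX0 : X ≠ 0) :
    ∃ C, Cocircuit L C ∧ C ≼ X := by
  classical
  obtain ⟨C, hC, hmin⟩ :=
    (univ.filter fun Y => Y ∈ L ∧ Y ≠ 0 ∧ Y ≼ X).exists_min_image
    (fun Y => (suppFinset Y).card) ⟨X, by simpa using ⟨hX, hX0, ConformalLE.refl X⟩⟩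
  simp only [mem_filter, mem_univ, true_and] at hC hmin
  refine ⟨C, ⟨hC.1, hC.2.1, fun Y hY hY0 (hYC : Y ≼ C) => ?_⟩, hC.2.2⟩
  exact hYC.eq_of_suppFinset_subset (Finset.eq_of_subset_of_card_le hYC.suppFinset_subset
    (hmin Y ⟨hY, hY0, hYC.trans hC.2.2⟩)).symm.subset

/-- Eliminating `X` against `W` at a separating coordinate keeps a nonzero covector with support
strictly inside that of `X` and strictly fewer separations from `X`. -/
theorem Cocircuit.not_suppFinset_ssubset (hse : StrongElim L) (hX : Cocircuit L X)
    {W : U → SignType} (hW : W ∈ L) (hW0 : W ≠ 0) : ¬ suppFinset W ⊂ suppFinset X := by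
  intro hss
  induction hn : (sep X W).card using Nat.strong_induction_on generalizing W with
  | _ n ih =>
  rcases (sep X W).eq_empty_or_nonempty with hsep | ⟨e, he⟩
  · refine hss.ne (congrArg suppFinset (hX.2.2 W hW hW0 fun u => ?_))
    by_cases hWu : W u = 0
    · exact Or.inl hWu
    · have hXu : X u ≠ 0 := mem_suppFinset.1 (hss.subset (mem_suppFinset.2 hWu))
      have hu : X u * W u ≠ -1 := fun h => by
        simpa [hsep] using (show u ∈ sep X W by simp [sep, h])
      exact Or.inr (eq_of_mul_ne_neg_one hXu hWu hu).symm
  · have heXW : X e * W e = -1 := by simpa [sep] using he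
    obtain ⟨V, hV, hVe, hVsub, hVX⟩ := hse.exists_of_suppFinset_subset hX.1 hW hss.subset heXW
    obtain ⟨w, hwX, hwW⟩ := Finset.exists_of_ssubset hss
    have hWw : W w = 0 := by simpa using hwW
    have hVw : V w = X w := hVX w (mem_suppFinset.1 hwX) (by simp [hWw])
    have hVss : suppFinset V ⊂ suppFinset X :=
      Finset.ssubset_iff_subset_ne.2 ⟨hVsub, fun h => by
        have he' := mem_suppFinset.2 (ne_zero_of_mul_eq_neg_one heXW)
        simp [← h, hVe] at he'⟩
    have hsep : sep X V ⊂ sep X W := by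
      refine Finset.ssubset_iff_subset_ne.2 ⟨fun u hu => ?_, fun h => ?_⟩
      swap
      · rw [← h] at he
        simp [sep, hVe] at he
      simp only [sep, mem_filter, mem_univ, true_and] at hu ⊢
      by_contra hXW
      rw [hVX u (ne_zero_of_mul_eq_neg_one hu) hXW] at hu
      exact mul_self_ne_neg_one _ hu
    exact ih _ (hn ▸ Finset.card_lt_card hsep) hV
      (Function.ne_iff.2 ⟨w, hVw ▸ mem_suppFinset.1 hwX⟩) hVss rfl

theorem Cocircuit.eq_or_eq_neg (hse : StrongElim L) (hX : Cocircuit L X) (hY : Cocircuit L Y)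
    (h : suppFinset X = suppFinset Y) : Y = X ∨ Y = -X := by
  have hzero : ∀ u, X u = 0 → Y u = 0 := fun u hXu => by
    simpa [hXu] using congrArg (u ∈ ·) h
  by_cases hsep : ∃ e, X e * Y e = -1
  · right
    by_contra hne
    obtain ⟨e, he⟩ := hsep
    obtain ⟨g, hXg, hg⟩ : ∃ g, X g ≠ 0 ∧ X g * Y g ≠ -1 := by
      by_contra! hall
      refine hne (funext fun u => ?_)
      by_cases hXu : X u = 0
      · simp [hXu, hzero u hXu]
      · exact eq_neg_of_mul_eq_neg_one (hall u hXu)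
    obtain ⟨V, hV, hVe, hVsub, hVX⟩ := hse.exists_of_suppFinset_subset hX.1 hY.1 h.ge he
    refine hX.not_suppFinset_ssubset hse hV (Function.ne_iff.2 ⟨g, by rwa [hVX g hXg hg]⟩)
      (Finset.ssubset_iff_subset_ne.2 ⟨hVsub, fun hVX => ?_⟩)
    have he' := mem_suppFinset.2 (ne_zero_of_mul_eq_neg_one he)
    simp [← hVX, hVe] at he'
  · simp only [not_exists] at hsep
    left
    refine hX.2.2 Y hY.1 hY.2.1 fun u => ?_
    by_cases hYu : Y u = 0
    · exact Or.inl hYu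
    · have hXu : X u ≠ 0 := fun hXu => hYu (hzero u hXu)
      exact Or.inr (eq_of_mul_ne_neg_one hXu hYu (hsep u)).symm

end Cocircuits

theorem exists_tope_conformalLE [Fintype U] {L : Set (U → SignType)}
    (hc : ∀ X ∈ L, ∀ Y ∈ L, comp X Y ∈ L) (hloopless : ∀ e, ∃ X ∈ L, X e ≠ 0)
    {X : U → SignType} (hX : X ∈ L) : ∃ T ∈ L, X ≼ T ∧ ∀ e, T e ≠ 0 := by
  classical
  suffices ∀ S : Finset U, ∃ T ∈ L, X ≼ T ∧ ∀ e ∈ S, T e ≠ 0 by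
    simpa using this univ
  intro S
  induction S using Finset.induction_on with
  | empty => exact ⟨X, hX, ConformalLE.refl X, by simp⟩
  | @insert e S _ ih =>
    obtain ⟨T, hT, hXT, hTS⟩ := ih
    obtain ⟨W, hW, hWe⟩ := hloopless e
    refine ⟨comp T W, hc T hT W hW, hXT.trans (conformalLE_comp T W), fun f hf => ?_⟩
    rcases mem_insert.1 hf with rfl | hf
    · exact comp_ne_zero_apply hWe
    · rw [comp_apply_of_ne_zero (hTS f hf)]
      exact hTS f hf

section Topes

variable {L : Set (U → SignType)} {T : U → SignType} {e : U} {b : Bool}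

def ofVertex (v : U → Bool) : U → SignType := fun e => ofBool (v e)

theorem ofVertex_ne_zero (v : U → Bool) (e : U) : ofVertex v e ≠ 0 := ofBool_ne_zero _

theorem tb_ofVertex (v : U → Bool) : tb (ofVertex v) = v := by
  funext e
  exact decide_ofBool_eq_one (v e)

theorem ofVertex_tb (hT : ∀ e, T e ≠ 0) : ofVertex (tb T) = T :=
  funext fun e => ofBool_decide_eq_one (hT e)

theorem tb_apply_of_eq_ofBool (h : T e = ofBool b) : tb T e = b := by
  simp only [tb, h, decide_ofBool_eq_one]

theorem mem_topeSet_iff {v : U → Bool} : v ∈ TopeSet L ↔ ofVertex v ∈ L := by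
  constructor
  · rintro ⟨T, ⟨hT, hfull⟩, rfl⟩
    rwa [ofVertex_tb hfull]
  · exact fun h => ⟨ofVertex v, ⟨h, ofVertex_ne_zero v⟩, tb_ofVertex v⟩

def halfspace (L : Set (U → SignType)) (e : U) (b : Bool) : Set (U → Bool) :=
  TopeSet L ∩ {f | f e = b}

theorem tb_mem_halfspace (hT : T ∈ L) (hfull : ∀ e, T e ≠ 0) (he : T e = ofBool b) :
    tb T ∈ halfspace L e b :=
  ⟨⟨T, ⟨hT, hfull⟩, rfl⟩, tb_apply_of_eq_ofBool he⟩

end Topes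

def ProperFacesAreCubes (L : Set (U → SignType)) : Prop :=
  ∀ X ∈ L, X ≠ 0 → ∀ Y, X ≼ Y → Y ∈ L

section Cubes

variable [Fintype U] {L : Set (U → SignType)}

theorem properFacesAreCubes_of_update_mem [DecidableEq U]
    (h : ∀ X ∈ L, X ≠ 0 → ∀ e s, X e = 0 → s ≠ 0 → Function.update X e s ∈ L) :
    ProperFacesAreCubes L := by
  intro X hX hX0 Y hXY
  suffices key : ∀ S : Finset U, ∀ X ∈ L, X ≠ 0 → X ≼ Y →
      (∀ u, X u ≠ Y u → u ∈ S) → Y ∈ L from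
    key univ X hX hX0 hXY fun u _ => mem_univ u
  intro S
  induction S using Finset.induction_on with
  | empty =>
    intro X hX _ _ hS
    have hXY : X = Y := funext fun u => by
      by_contra hu
      simpa using hS u hu
    exact hXY ▸ hX
  | @insert e S _ ih =>
    intro X hX hX0 hXY hS
    by_cases hXYe : X e = Y e
    · refine ih X hX hX0 hXY fun u hu => (mem_insert.1 (hS u hu)).resolve_left ?_
      rintro rfl
      exact hu hXYe
    have hXe : X e = 0 := (hXY e).resolve_right hXYe
    have hYe : Y e ≠ 0 := fun h => hXYe (hXe.trans h.symm)
    refine ih _ (h X hX hX0 e (Y e) hXe hYe) (Function.ne_iff.2 ⟨e, by simpa⟩)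
      (fun u => ?_) (fun u hu => ?_)
    all_goals rcases eq_or_ne u e with rfl | hue
    · simp
    · simpa [Function.update_of_ne hue] using hXY u
    · simp at hu
    · rw [Function.update_of_ne hue] at hu
      exact (mem_insert.1 (hS u hu)).resolve_left hue

theorem IsUOMofRank.le_card_suppFinset [DecidableEq U] {r : ℕ} (hU : IsUOMofRank L r)
    {V : U → SignType} (hV : V ∈ L) (hV0 : V ≠ 0) :
    Fintype.card U - r + 1 ≤ (suppFinset V).card := by
  obtain ⟨C, hC, hCV⟩ := exists_cocircuit_conformalLE hV hV0
  exact (hU.1 C hC).symm.le.trans (card_le_card hCV.suppFinset_subset)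

theorem IsUOMofRank.properFacesAreCubes [DecidableEq U] {r : ℕ} (hom : IsOM L)
    (hU : IsUOMofRank L r) : ProperFacesAreCubes L := by
  refine properFacesAreCubes_of_update_mem fun X hX hX0 e s hXe hs => ?_
  have hk := hU.le_card_suppFinset hX hX0
  obtain ⟨B, hBX, hBcard⟩ := Finset.exists_subset_card_eq (s := suppFinset X)
    (n := Fintype.card U - r) (by omega)
  have heB : e ∉ B := fun he => mem_suppFinset.1 (hBX he) hXe
  obtain ⟨C, hC, hCsupp⟩ := hU.2.1 (insert e B) (by rw [card_insert_of_notMem heB, hBcard])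
  change suppFinset C = insert e B at hCsupp
  have hCe : C e ≠ 0 := mem_suppFinset.1 (hCsupp ▸ mem_insert_self e B)
  obtain ⟨C', hC', hC'e, hC'supp⟩ : ∃ C' ∈ L, C' e = s ∧ suppFinset C' = insert e B := by
    rcases eq_or_eq_neg_of_ne_zero hCe hs with rfl | rfl
    · exact ⟨C, hC.1, rfl, hCsupp⟩
    · exact ⟨-C, hom.sym C hC.1, rfl, by rw [suppFinset_neg, hCsupp]⟩
  convert hom.c X hX C' hC' using 1
  funext u
  rcases eq_or_ne u e with rfl | hue
  · rw [Function.update_self, comp_apply_of_eq_zero hXe, hC'e]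
  rw [Function.update_of_ne hue]
  by_cases hXu : X u = 0
  · have hC'u : C' u = 0 := by
      by_contra h
      rcases mem_insert.1 (hC'supp ▸ mem_suppFinset.2 h) with h' | h'
      · exact hue h'
      · exact mem_suppFinset.1 (hBX h') hXu
    rw [comp_apply_of_eq_zero hXu, hXu, hC'u]
  · rw [comp_apply_of_ne_zero hXu]

variable {k : ℕ}

theorem ProperFacesAreCubes.exists_suppFinset_exchange (hom : IsOM L)
    (hB : ProperFacesAreCubes L) (hmin : ∀ V ∈ L, V ≠ 0 → k ≤ (suppFinset V).card)
    {Y : U → SignType} (hY : Y ∈ L) (hYk : (suppFinset Y).card = k) {e f : U}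
    (he : e ∈ suppFinset Y) (hf : f ∉ suppFinset Y) :
    ∃ V ∈ L, suppFinset V = insert f ((suppFinset Y).erase e) := by
  classical
  have hYe : Y e ≠ 0 := mem_suppFinset.1 he
  have hYf : Y f = 0 := by simpa using hf
  have hef : e ≠ f := ne_of_mem_of_not_mem he hf
  have hY0 : Y ≠ 0 := Function.ne_iff.2 ⟨e, hYe⟩
  have hnegY0 : -Y ≠ 0 := Function.ne_iff.2 ⟨e, by simpa [SignType.neg_eq_zero_iff] using hYe⟩
  have hup : ∀ Z ∈ L, Z ≠ 0 → Z f = 0 → Function.update Z f 1 ∈ L := fun Z hZ hZ0 hZf =>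
    hB Z hZ hZ0 _ fun u => by
      rcases eq_or_ne u f with rfl | huf
      · exact Or.inl hZf
      · exact Or.inr (Function.update_of_ne huf _ _).symm
  obtain ⟨V, hV, hVe, hVeq⟩ := hom.strongElim.exists_eq_of_eq (hup Y hY hY0 hYf)
    (hup (-Y) (hom.sym Y hY) hnegY0 (by simp [hYf])) (e := e)
    (by simpa [Function.update_of_ne hef] using mul_neg_self_of_ne_zero hYe)
  have hsub : suppFinset V ⊆ insert f ((suppFinset Y).erase e) := by
    intro u hu
    rw [mem_suppFinset] at hu
    rcases eq_or_ne u f with rfl | huf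
    · exact mem_insert_self _ _
    refine mem_insert_of_mem (mem_erase.2 ⟨fun hue => hu (hue ▸ hVe), mem_suppFinset.2 ?_⟩)
    intro hYu
    exact hu (by simpa [Function.update_of_ne huf, hYu] using hVeq u (by simp [huf, hYu]))
  refine ⟨V, hV, Finset.eq_of_subset_of_card_le hsub ?_⟩
  have hVf : V f = 1 := by simpa using hVeq f (by simp)
  rw [card_insert_of_notMem (fun h => hf (mem_of_mem_erase h)), card_erase_of_mem he, hYk]
  have := hmin V hV (Function.ne_iff.2 ⟨f, by simp [hVf]⟩)
  have := card_pos.2 ⟨e, he⟩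
  omega

theorem ProperFacesAreCubes.exists_suppFinset_eq (hom : IsOM L)
    (hB : ProperFacesAreCubes L) (hmin : ∀ V ∈ L, V ≠ 0 → k ≤ (suppFinset V).card)
    {Y : U → SignType} (hY : Y ∈ L) (hYk : (suppFinset Y).card = k) {A : Finset U}
    (hA : A.card = k) : ∃ V ∈ L, suppFinset V = A := by
  classical
  induction hn : (A \ suppFinset Y).card generalizing Y with
  | zero =>
    refine ⟨Y, hY, (Finset.eq_of_subset_of_card_le ?_ (by rw [hA, hYk])).symm⟩
    exact sdiff_eq_empty_iff_subset.1 (card_eq_zero.1 hn)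
  | succ n ih =>
    obtain ⟨f, hf⟩ : (A \ suppFinset Y).Nonempty := card_pos.1 (by omega)
    obtain ⟨e, he⟩ : (suppFinset Y \ A).Nonempty :=
      card_pos.1 (by rw [card_sdiff_comm (hYk.trans hA.symm)]; omega)
    rw [mem_sdiff] at he hf
    obtain ⟨V, hV, hVsupp⟩ := hB.exists_suppFinset_exchange hom hmin hY hYk he.1 hf.2
    refine ih hV ?_ ?_
    · rw [hVsupp, card_insert_of_notMem (fun h => hf.2 (mem_of_mem_erase h)),
        card_erase_of_mem he.1, hYk]
      have := card_pos.2 ⟨e, he.1⟩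
      omega
    · have : A \ suppFinset V = (A \ suppFinset Y).erase f := by
        ext u
        simp only [hVsupp, mem_sdiff, mem_insert, mem_erase]
        grind
      rw [this, card_erase_of_mem (mem_sdiff.2 hf), hn]
      rfl

theorem ProperFacesAreCubes.exists_isUOMofRank [DecidableEq U] (hom : IsOM L)
    (hB : ProperFacesAreCubes L) : ∃ r, IsUOMofRank L r := by
  classical
  by_cases hL : ∃ V ∈ L, V ≠ 0
  swap
  · simp only [not_exists, not_and, not_not] at hL
    refine ⟨0, fun X hX => absurd (hL X hX.1) hX.2.1, fun A hA => ?_,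
      fun X _ hX => absurd (hL X hX.1) hX.2.1⟩
    have := card_le_univ A
    omega
  obtain ⟨V₀, hV₀, hV₀0⟩ := hL
  obtain ⟨Y, hY, hYmin⟩ := (univ.filter fun V => V ∈ L ∧ V ≠ 0).exists_min_image
    (fun V => (suppFinset V).card) ⟨V₀, by simpa using ⟨hV₀, hV₀0⟩⟩
  simp only [mem_filter, mem_univ, true_and] at hY hYmin
  set k := (suppFinset Y).card
  have hmin : ∀ V ∈ L, V ≠ 0 → k ≤ (suppFinset V).card :=
    fun V hV hV0 => hYmin V ⟨hV, hV0⟩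
  have hk1 : 1 ≤ k := card_pos.2 ((Function.ne_iff.1 hY.2).imp fun _ he => mem_suppFinset.2 he)
  have hkm : k ≤ Fintype.card U := card_le_univ _
  refine ⟨Fintype.card U - k + 1, ?_⟩
  have hr : Fintype.card U - (Fintype.card U - k + 1) + 1 = k := by omega
  refine ⟨fun X hX => ?_, fun A hA => ?_, fun X Y hX hY h => ?_⟩
  · obtain ⟨A, hAX, hAk⟩ := exists_subset_card_eq (hmin X hX.1 hX.2.1)
    obtain ⟨V, hV, rfl⟩ := hB.exists_suppFinset_eq hom hmin hY.1 rfl hAk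
    have hV0 : V ≠ 0 := ne_zero_of_suppFinset_nonempty (card_pos.1 (by omega))
    rw [hr, ← hAk,
      hAX.eq_or_ssubset.resolve_right (hX.not_suppFinset_ssubset hom.strongElim hV hV0)]
    rfl
  · rw [hr] at hA
    obtain ⟨V, hV, hVA⟩ := hB.exists_suppFinset_eq hom hmin hY.1 rfl hA
    have hV0 : V ≠ 0 := ne_zero_of_suppFinset_nonempty (card_pos.1 (by rw [hVA]; omega))
    refine ⟨V, ⟨hV, hV0, fun W hW hW0 (hWV : W ≼ V) => ?_⟩, hVA⟩
    exact hWV.eq_of_suppFinset_subset (eq_of_subset_of_card_le hWV.suppFinset_subset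
      (hVA ▸ hA ▸ hmin W hW hW0)).ge
  · exact Cocircuit.eq_or_eq_neg hom.strongElim hX hY (Finset.ext fun e => by simpa using h e)

theorem ProperFacesAreCubes.isAmple_halfspace [DecidableEq U] (hom : IsOM L)
    (hloopless : ∀ e, ∃ X ∈ L, X e ≠ 0) (hB : ProperFacesAreCubes L) (e : U) (b : Bool) :
    IsAmple (halfspace L e b) := by
  intro S hS
  have heS : e ∉ S := fun heS => by
    obtain ⟨a, ha, hag⟩ := hS fun _ => !b
    have hae : a e = b := ha.2
    simpa [hae] using hag e heS
  obtain ⟨W, hW, hWS, hWe⟩ := hom.strongElim.exists_zero_on (disjoint_singleton_right.2 heS)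
    (c := fun _ => ofBool b) fun g => by
      obtain ⟨a, ha, hag⟩ := hS g
      have hae : a e = b := ha.2
      refine ⟨ofVertex a, mem_topeSet_iff.1 ha.1, fun x hx => by simp [ofVertex, hag x hx],
        fun y hy => ?_⟩
      rw [mem_singleton.1 hy]
      simp [ofVertex, hae]
  have hWe' : W e ≠ 0 := by simpa [hWe e (mem_singleton_self e)] using ofBool_ne_zero b
  obtain ⟨T, hT, hWT, hfull⟩ := exists_tope_conformalLE hom.c hloopless hW
  refine ⟨tb T, fun g => ⟨mem_topeSet_iff.2 (hB W hW (Function.ne_iff.2 ⟨e, hWe'⟩) _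
    fun u => ?_), ?_⟩⟩
  · by_cases hWu : W u = 0
    · exact Or.inl hWu
    · have huS : u ∉ S := fun hu => hWu (hWS u hu)
      refine Or.inr ?_
      show W u = ofBool (if u ∈ S then g u else tb T u)
      rw [if_neg huS, ← hWT.apply_eq hWu]
      exact (ofBool_decide_eq_one (hfull u)).symm
  · show (if e ∈ S then g e else tb T e) = b
    rw [if_neg heS]
    exact tb_apply_of_eq_ofBool ((hWT.apply_eq hWe').trans (hWe e (mem_singleton_self e)))

end Cubes

theorem exists_tope_conformalLE_fill {L : Set (U → SignType)} (hom : IsOM L)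
    {X W₁ : U → SignType} (hX : X ∈ L) (hW₁ : W₁ ∈ L) (hXW₁ : X ≼ W₁) {z : U} (hXz : X z = 0)
    (hW₁z : W₁ z ≠ 0)
    (ih : ∀ W ∈ L, X ≼ W → W ≠ X → ∀ Y, W ≼ Y → Y ∈ L) (g : U → Bool) :
    ∃ T ∈ L, X ≼ T ∧ (∀ u, T u ≠ 0) ∧
      ∀ u, X u = 0 → (u = z ∨ W₁ u = 0) → T u = ofBool (g u) := by
  obtain ⟨W, hW, hXW, hWz, hW0⟩ :
      ∃ W ∈ L, X ≼ W ∧ W z = ofBool (g z) ∧ ∀ u, W₁ u = 0 → W u = 0 := by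
    rcases eq_or_eq_neg_of_ne_zero hW₁z (ofBool_ne_zero (g z)) with h | h
    · exact ⟨W₁, hW₁, hXW₁, h.symm, fun _ => id⟩
    · refine ⟨comp X (-W₁), hom.c X hX _ (hom.sym W₁ hW₁), conformalLE_comp X _, ?_,
        fun u hu => ?_⟩
      · rw [comp_apply_of_eq_zero hXz, Pi.neg_apply, h]
      · rw [comp_apply_of_eq_zero ((hXW₁ u).elim id (·.trans hu)), Pi.neg_apply, hu]
        rfl
  have hWX : W ≠ X := fun h => ofBool_ne_zero (g z) (hWz ▸ h ▸ hXz)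
  refine ⟨comp W (ofVertex g), ih W hW hXW hWX _ (conformalLE_comp W _),
    hXW.trans (conformalLE_comp W _), fun u => comp_ne_zero_apply (ofVertex_ne_zero g u),
    fun u _ hu => ?_⟩
  rcases hu with rfl | hu
  · rw [comp_apply_of_ne_zero (hWz ▸ ofBool_ne_zero _), hWz]
  · rw [comp_apply_of_eq_zero (hW0 u hu)]
    rfl

section AmpleHalfspaces

variable [Fintype U] {L : Set (U → SignType)}

theorem mem_of_conformalLE_of_forall_fill (hse : StrongElim L) {X Y : U → SignType}
    (hfill : ∀ g : U → Bool, ∃ T ∈ L, X ≼ T ∧ ∀ u, X u = 0 → T u = ofBool (g u))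
    (hXY : X ≼ Y) : Y ∈ L := by
  classical
  set S := univ.filter fun u => Y u = 0
  obtain ⟨V, hV, hVS, hVK⟩ := hse.exists_zero_on (K := Sᶜ) disjoint_compl_right (c := Y)
    fun g => by
      obtain ⟨T, hT, hXT, hTg⟩ := hfill fun u => if Y u = 0 then g u else tb Y u
      refine ⟨T, hT, fun x hx => ?_, fun y hy => ?_⟩
      · have hYx : Y x = 0 := by simpa [S] using hx
        have hXx : X x = 0 := (hXY x).elim id (·.trans hYx)
        simp [hTg x hXx, hYx]
      · have hYy : Y y ≠ 0 := by simpa [S] using hy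
        by_cases hXy : X y = 0
        · rw [hTg y hXy, if_neg hYy]
          exact ofBool_decide_eq_one hYy
        · rw [hXT.apply_eq hXy, hXY.apply_eq hXy]
  convert hV using 1
  funext u
  by_cases hu : u ∈ S
  · rw [hVS u hu]
    simpa [S] using hu
  · exact (hVK u (mem_compl.2 hu)).symm

theorem eq_of_isAmple_of_minimal [DecidableEq U] (hom : IsOM L)
    (hC : ∀ e b, IsAmple (halfspace L e b)) {X W₁ : U → SignType} (hX : X ∈ L)
    (hX0 : X ≠ 0)
    (hmin : ∀ W ∈ L, X ≼ W → W ≠ X → (suppFinset W₁).card ≤ (suppFinset W).card)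
    (hXW₁ : X ≼ W₁) {z : U} (hXz : X z = 0) (hW₁z : W₁ z ≠ 0)
    (hfill : ∀ g : U → Bool, ∃ T ∈ L, X ≼ T ∧ (∀ u, T u ≠ 0) ∧
      ∀ u, X u = 0 → (u = z ∨ W₁ u = 0) → T u = ofBool (g u))
    {z' : U} (hXz' : X z' = 0) (hW₁z' : W₁ z' ≠ 0) : z' = z := by
  by_contra hz'
  obtain ⟨e, he⟩ := Function.ne_iff.1 hX0
  set S := univ.filter fun u => X u = 0 ∧ (u = z ∨ W₁ u = 0)
  have hshat : Shatters (halfspace L e (tb X e)) S := fun g => by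
    obtain ⟨T, hT, hXT, hfull, hTg⟩ := hfill g
    refine ⟨tb T, tb_mem_halfspace hT hfull ?_, fun u hu => ?_⟩
    · rw [hXT.apply_eq he]
      exact (ofBool_decide_eq_one he).symm
    · simp only [S, mem_filter, mem_univ, true_and] at hu
      exact tb_apply_of_eq_ofBool (hTg u hu.1 hu.2)
  obtain ⟨a, ha⟩ := hC e (tb X e) S hshat
  obtain ⟨V, hV, hVS, hVa⟩ := hom.strongElim.exists_zero_on (K := Sᶜ) disjoint_compl_right
    (c := ofVertex a) fun g => ⟨_, mem_topeSet_iff.1 (ha g).1,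
      fun x hx => by simp [ofVertex, hx], fun y hy => by simp [ofVertex, mem_compl.1 hy]⟩
  have hz'S : z' ∉ S := by simp [S, hz', hW₁z']
  have hsub : suppFinset (comp X V) ⊆ (suppFinset W₁).erase z := by
    intro u hu
    rw [mem_suppFinset] at hu
    rw [mem_erase, mem_suppFinset]
    by_cases hXu : X u = 0
    · rw [comp_apply_of_eq_zero hXu] at hu
      have huS : u ∉ S := fun huS => hu (hVS u huS)
      simp only [S, mem_filter, mem_univ, true_and, not_and, not_or] at huS
      exact ⟨(huS hXu).1, (huS hXu).2⟩
    · rw [hXW₁.apply_eq hXu]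
      exact ⟨fun huz => hXu (huz ▸ hXz), hXu⟩
  refine absurd (hmin _ (hom.c X hX V hV) (conformalLE_comp X V) fun h => ?_)
    (not_le.2 (card_lt_card (hsub.trans_ssubset (erase_ssubset (mem_suppFinset.2 hW₁z)))))
  have hz'V := congrFun h z'
  rw [comp_apply_of_eq_zero hXz', hVa z' (mem_compl.2 hz'S)] at hz'V
  exact ofVertex_ne_zero a z' (hz'V.trans hXz')

theorem forall_fill_of_isAmple [DecidableEq U] (hom : IsOM L)
    (hloopless : ∀ e, ∃ X ∈ L, X e ≠ 0) (hC : ∀ e b, IsAmple (halfspace L e b))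
    {X : U → SignType} (hX : X ∈ L) (hX0 : X ≠ 0)
    (ih : ∀ W ∈ L, X ≼ W → W ≠ X → ∀ Y, W ≼ Y → Y ∈ L) (g : U → Bool) :
    ∃ T ∈ L, X ≼ T ∧ ∀ u, X u = 0 → T u = ofBool (g u) := by
  obtain ⟨T₀, hT₀, hXT₀, hT₀full⟩ := exists_tope_conformalLE hom.c hloopless hX
  by_cases hT₀X : T₀ = X
  · exact ⟨X, hX, .refl X, fun u hu => absurd hu (hT₀X ▸ hT₀full u)⟩
  obtain ⟨W₁, hW₁, hmin⟩ :=
    (univ.filter fun W => W ∈ L ∧ X ≼ W ∧ W ≠ X).exists_min_image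
    (fun W => (suppFinset W).card) ⟨T₀, by simpa using ⟨hT₀, hXT₀, hT₀X⟩⟩
  simp only [mem_filter, mem_univ, true_and] at hW₁ hmin
  obtain ⟨hW₁L, hXW₁, hW₁X⟩ := hW₁
  obtain ⟨z, hz, hXz⟩ := exists_of_ssubset (hXW₁.suppFinset_ssubset (Ne.symm hW₁X))
  rw [mem_suppFinset] at hz
  rw [mem_suppFinset, not_not] at hXz
  have hfill := exists_tope_conformalLE_fill hom hX hW₁L hXW₁ hXz hz ih
  obtain ⟨T, hT, hXT, -, hTg⟩ := hfill g
  refine ⟨T, hT, hXT, fun u hXu => hTg u hXu (or_iff_not_imp_right.2 fun hu =>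
    eq_of_isAmple_of_minimal hom hC hX hX0 (fun W hW hXW hWX => hmin W ⟨hW, hXW, hWX⟩) hXW₁
      hXz hz hfill hXu hu)⟩

theorem ProperFacesAreCubes.of_isAmple [DecidableEq U] (hom : IsOM L)
    (hloopless : ∀ e, ∃ X ∈ L, X e ≠ 0) (hC : ∀ e b, IsAmple (halfspace L e b)) :
    ProperFacesAreCubes L := by
  intro X hX hX0
  induction hn : (suppFinset X)ᶜ.card using Nat.strong_induction_on generalizing X with
  | _ n ih =>
  refine fun Y => mem_of_conformalLE_of_forall_fill hom.strongElim
    (forall_fill_of_isAmple hom hloopless hC hX hX0 fun W hW hXW hWX =>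
      ih _ ?_ W hW (hXW.ne_zero hX0) rfl)
  exact hn ▸ card_lt_card (compl_ssubset_compl.2 (hXW.suppFinset_ssubset (Ne.symm hWX)))

end AmpleHalfspaces

/-- A (simple) oriented matroid is uniform if and only if every proper
face `F(X)` (with `X ≠ 0`) is a hypercube (every sign vector above `X` is a covector), and
this holds if and only if every halfspace of its tope graph is an ample partial cube. -/
theorem stmt15 [Fintype U] [DecidableEq U] (L : Set (U → SignType))
    (hom : IsOM L) (hsimple : SimpleSV L) :
    ((∃ r : ℕ, IsUOMofRank L r) ↔
      ∀ X ∈ L, X ≠ (0 : U → SignType) →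
        ∀ Y : U → SignType, (∀ e, X e = 0 ∨ X e = Y e) → Y ∈ L) ∧
    ((∃ r : ℕ, IsUOMofRank L r) ↔
      ∀ (e : U) (b : Bool), IsAmple (TopeSet L ∩ {f | f e = b})) := by
  have hloopless : ∀ e, ∃ X ∈ L, X e ≠ 0 := fun e => by
    obtain ⟨X, hX, hXe⟩ := hsimple.1 e 1
    exact ⟨X, hX, hXe ▸ one_ne_zero⟩
  have hBA : ProperFacesAreCubes L → ∃ r, IsUOMofRank L r := fun hB => hB.exists_isUOMofRank hom
  refine ⟨⟨fun ⟨_, hU⟩ => hU.properFacesAreCubes hom, hBA⟩,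
    ⟨fun ⟨_, hU⟩ => (hU.properFacesAreCubes hom).isAmple_halfspace hom hloopless,
      fun hC => hBA (.of_isAmple hom hloopless hC)⟩⟩
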